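/- arXiv:1705.00212 — 4 statements merged into one kernel-verified Lean document; each statement's English description precedes it below -/
import Mathlib

section
/- Existence of a replicating strategy for an arbitrary path-dependent payoff (CRR path-dependent pricing): for every payoff map f : Ω → ℝ there exists a predictable self-financing trading strategy whose terminal wealth equals f ω for every ω ∈ Ω and whose initial wealth equals (1+r)^(−T) * ∑_{ω ∈ Ω} f ω * q^(x(ω)) * (1−q)^(T − x(ω)). -/
open Finset

/-- Stock price at time `t` in the `T`-step CRR binomial model. -/
def crrStock (T : ℕ) (S0 u d : ℝ) (t : ℕ) (ω : Fin T → Bool) : ℝ :=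
  S0 * ∏ i ∈ Finset.univ.filter (fun i : Fin T => (i : ℕ) < t),
    (if ω i then 1 + u else 1 + d)

/-- A trading strategy `(a, b)` is predictable if the holdings chosen at time `t`
depend only on the first `t` coordinates of the trajectory. -/
def crrPredictable {T : ℕ} (a b : Fin T → (Fin T → Bool) → ℝ) : Prop :=
  ∀ (t : Fin T) (ω ω' : Fin T → Bool),
    (∀ i : Fin T, (i : ℕ) < (t : ℕ) → ω i = ω' i) →
      a t ω = a t ω' ∧ b t ω = b t ω'

/-- Self-financing condition for the strategy `(a, b)`. -/
def crrSelfFinancing {T : ℕ} (S0 u d r : ℝ) (a b : Fin T → (Fin T → Bool) → ℝ) : Prop :=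
  ∀ (t : ℕ) (ht : t + 1 < T) (ω : Fin T → Bool),
    a ⟨t, by omega⟩ ω * crrStock T S0 u d (t + 1) ω + b ⟨t, by omega⟩ ω * (1 + r) ^ (t + 1)
      = a ⟨t + 1, ht⟩ ω * crrStock T S0 u d (t + 1) ω + b ⟨t + 1, ht⟩ ω * (1 + r) ^ (t + 1)

/-- Initial wealth of the strategy `(a, b)`. -/
def crrInitialWealth {T : ℕ} (hT : 0 < T) (S0 : ℝ) (a b : Fin T → (Fin T → Bool) → ℝ)
    (ω : Fin T → Bool) : ℝ :=
  a ⟨0, hT⟩ ω * S0 + b ⟨0, hT⟩ ω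

/-- Terminal wealth of the strategy `(a, b)`. -/
def crrTerminalWealth {T : ℕ} (hT : 0 < T) (S0 u d r : ℝ)
    (a b : Fin T → (Fin T → Bool) → ℝ) (ω : Fin T → Bool) : ℝ :=
  a ⟨T - 1, by omega⟩ ω * crrStock T S0 u d T ω + b ⟨T - 1, by omega⟩ ω * (1 + r) ^ T

/-- Number of up-moves in the trajectory `ω`. -/
def crrUps {T : ℕ} (ω : Fin T → Bool) : ℕ :=
  (Finset.univ.filter (fun i : Fin T => ω i = true)).card

/-! The discounted risk-neutral conditional expectation `V t` of the payoff given the first `t`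
moves satisfies `V t = (q V⁺ + (1 - q) V⁻) / (1 + r)`, where `V⁺`, `V⁻` are its values at time
`t + 1` after an up- and a down-move. The delta hedge over period `t` solves the 2×2 linear system
that makes the portfolio worth `V⁺` resp. `V⁻` at time `t + 1`; by the recursion it costs exactly
`V t` at time `t`. So rebalancing is self-financing, the terminal wealth is `V T = f`, and the
initial wealth is `V 0`, which is the pricing formula. -/

namespace CRR

open Function

variable {T : ℕ}

section Paths

theorem filter_val_lt_succ (t : Fin T) :
    univ.filter (fun i : Fin T => (i : ℕ) < t + 1)
      = insert t (univ.filter fun i : Fin T => (i : ℕ) < t) := by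
  ext i; simp only [mem_filter, mem_univ, true_and, mem_insert, Fin.ext_iff]; omega

theorem filter_val_ge (t : Fin T) :
    univ.filter (fun i : Fin T => (t : ℕ) ≤ i)
      = insert t (univ.filter fun i : Fin T => (t : ℕ) + 1 ≤ i) := by
  ext i; simp only [mem_filter, mem_univ, true_and, mem_insert, Fin.ext_iff]; omega

def cylinder (t : ℕ) (ω : Fin T → Bool) : Finset (Fin T → Bool) :=
  univ.filter fun ω' => ∀ i : Fin T, (i : ℕ) < t → ω' i = ω i

theorem cylinder_zero (ω : Fin T → Bool) : cylinder 0 ω = univ := by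
  ext; simp [cylinder]

theorem cylinder_self (ω : Fin T → Bool) : cylinder T ω = {ω} := by
  ext ω'
  simp only [cylinder, mem_filter, mem_univ, true_and, mem_singleton, funext_iff]
  exact forall_congr' fun i => imp_iff_right i.isLt

theorem cylinder_congr {t : ℕ} {ω ω' : Fin T → Bool}
    (h : ∀ i : Fin T, (i : ℕ) < t → ω i = ω' i) : cylinder t ω = cylinder t ω' := by
  ext σ
  simp only [cylinder, mem_filter, mem_univ, true_and]
  exact forall_congr' fun i => forall_congr' fun hi => by rw [h i hi]

theorem cylinder_succ_update (t : Fin T) (ω : Fin T → Bool) (b : Bool) :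
    cylinder (t + 1) (update ω t b) = (cylinder t ω).filter (· t = b) := by
  ext σ
  simp only [cylinder, mem_filter, mem_univ, true_and]
  constructor
  · intro h
    refine ⟨fun i hi => ?_, by simpa using h t (Nat.lt_succ_self t)⟩
    rw [h i (by omega), update_of_ne (Fin.ne_of_val_ne (by omega))]
  · rintro ⟨h, hb⟩ i hi
    rcases Nat.lt_succ_iff_lt_or_eq.1 hi with hi | hi
    · rw [h i hi, update_of_ne (Fin.ne_of_val_ne (by omega))]
    · obtain rfl : i = t := Fin.ext hi
      simpa using hb

def Adapted (V : ℕ → (Fin T → Bool) → ℝ) : Prop :=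
  ∀ t (ω ω' : Fin T → Bool), (∀ i : Fin T, (i : ℕ) < t → ω i = ω' i) → V t ω = V t ω'

end Paths

section Stock

variable (S0 u d : ℝ)

theorem crrStock_zero (ω : Fin T → Bool) : crrStock T S0 u d 0 ω = S0 := by
  simp [crrStock]

theorem crrStock_succ (t : Fin T) (ω : Fin T → Bool) :
    crrStock T S0 u d (t + 1) ω = crrStock T S0 u d t ω * (if ω t then 1 + u else 1 + d) := by
  rw [crrStock, filter_val_lt_succ, prod_insert (by simp), crrStock]
  ring

theorem crrStock_congr {t : ℕ} {ω ω' : Fin T → Bool}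
    (h : ∀ i : Fin T, (i : ℕ) < t → ω i = ω' i) :
    crrStock T S0 u d t ω = crrStock T S0 u d t ω' := by
  unfold crrStock
  congr 1
  exact prod_congr rfl fun i hi => by rw [h i (mem_filter.1 hi).2]

variable {S0 u d}

theorem crrStock_ne_zero (hS0 : S0 ≠ 0) (hu : 1 + u ≠ 0) (hd : 1 + d ≠ 0) (t : ℕ)
    (ω : Fin T → Bool) : crrStock T S0 u d t ω ≠ 0 :=
  mul_ne_zero hS0 (prod_ne_zero_iff.2 fun i _ => by split <;> assumption)

end Stock

section Value

variable (r q : ℝ) (f : (Fin T → Bool) → ℝ)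

def tailWeight (t : ℕ) (ω : Fin T → Bool) : ℝ :=
  ∏ i ∈ univ.filter (fun i : Fin T => t ≤ (i : ℕ)), if ω i then q else 1 - q

theorem tailWeight_zero (ω : Fin T → Bool) :
    tailWeight q 0 ω = q ^ crrUps ω * (1 - q) ^ (T - crrUps ω) := by
  have hcard := card_filter_add_card_filter_not (s := univ) (fun i : Fin T => ω i = true)
  simp only [tailWeight, Nat.zero_le, filter_true, prod_ite, prod_const, crrUps, card_univ,
    Fintype.card_fin] at hcard ⊢
  congr 2
  omega

theorem tailWeight_self (ω : Fin T → Bool) : tailWeight q T ω = 1 :=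
  prod_eq_one fun i hi => absurd (mem_filter.1 hi).2 (not_le.2 i.isLt)

theorem tailWeight_succ (t : Fin T) (ω : Fin T → Bool) :
    tailWeight q t ω = (if ω t then q else 1 - q) * tailWeight q (t + 1) ω := by
  rw [tailWeight, filter_val_ge, prod_insert (by simp), tailWeight]

/-- The discounted risk-neutral conditional expectation of `f` given the first `t` moves. -/
noncomputable def value (t : ℕ) (ω : Fin T → Bool) : ℝ :=
  (1 + r) ^ ((t : ℤ) - T) * ∑ ω' ∈ cylinder t ω, f ω' * tailWeight q t ω'

theorem value_zero (ω : Fin T → Bool) :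
    value r q f 0 ω = (1 + r) ^ (-(T : ℤ)) *
      ∑ ω' : Fin T → Bool, f ω' * q ^ crrUps ω' * (1 - q) ^ (T - crrUps ω') := by
  simp only [value, cylinder_zero, tailWeight_zero, Nat.cast_zero, zero_sub, mul_assoc]

theorem value_self (ω : Fin T → Bool) : value r q f T ω = f ω := by
  simp [value, cylinder_self, tailWeight_self]

theorem value_adapted : Adapted (value r q f) := fun _ _ _ h => by
  rw [value, value, cylinder_congr h]

theorem value_succ {r} (hr : 1 + r ≠ 0) (t : Fin T) (ω : Fin T → Bool) :
    value r q f t ω = (1 + r)⁻¹ * (q * value r q f (t + 1) (update ω t true)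
      + (1 - q) * value r q f (t + 1) (update ω t false)) := by
  have hsplit : ∑ ω' ∈ cylinder t ω, f ω' * tailWeight q t ω'
      = q * ∑ ω' ∈ cylinder (t + 1) (update ω t true), f ω' * tailWeight q (t + 1) ω'
        + (1 - q) * ∑ ω' ∈ cylinder (t + 1) (update ω t false),
            f ω' * tailWeight q (t + 1) ω' := by
    rw [cylinder_succ_update, cylinder_succ_update, mul_sum, mul_sum,
      ← sum_filter_add_sum_filter_not (cylinder t ω) (· t = true)]
    simp only [Bool.not_eq_true]
    congr 1 <;> refine sum_congr rfl fun ω' hω' => ?_ <;>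
      rw [tailWeight_succ q, (mem_filter.1 hω').2] <;>
      simp only [if_true, Bool.false_eq_true, if_false] <;> ring
  have hdisc : (1 + r) ^ ((t : ℤ) - T) = (1 + r)⁻¹ * (1 + r) ^ (((t + 1 : ℕ) : ℤ) - T) := by
    rw [Nat.cast_succ, add_sub_right_comm, zpow_add_one₀ hr, mul_comm, mul_inv_cancel_right₀ hr]
  rw [value, hsplit, value, value, hdisc]
  ring

end Value

section Hedge

variable (S0 u d r : ℝ) (V : ℕ → (Fin T → Bool) → ℝ)

/-- Delta hedge: the holdings over period `t` that make the portfolio worth `V (t + 1)` after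
the up-move and after the down-move alike. -/
noncomputable def hedgeStock (t : Fin T) (ω : Fin T → Bool) : ℝ :=
  (V (t + 1) (update ω t true) - V (t + 1) (update ω t false))
    / (crrStock T S0 u d t ω * (u - d))

noncomputable def hedgeBond (t : Fin T) (ω : Fin T → Bool) : ℝ :=
  (V (t + 1) (update ω t false) - hedgeStock S0 u d V t ω * crrStock T S0 u d t ω * (1 + d))
    / (1 + r) ^ ((t : ℕ) + 1)

variable {S0 u d r V}

theorem hedge_predictable (hV : Adapted V) :
    crrPredictable (hedgeStock S0 u d V) (hedgeBond S0 u d r V) := by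
  intro t ω ω' h
  have hupdate (b : Bool) : V (t + 1) (update ω t b) = V (t + 1) (update ω' t b) := by
    refine hV _ _ _ fun i hi => ?_
    rcases eq_or_ne i t with rfl | hit
    · simp
    · rw [update_of_ne hit, update_of_ne hit, h i (by omega)]
  have hstock : hedgeStock S0 u d V t ω = hedgeStock S0 u d V t ω' := by
    rw [hedgeStock, hedgeStock, hupdate, hupdate, crrStock_congr S0 u d h]
  refine ⟨hstock, ?_⟩
  rw [hedgeBond, hedgeBond, hupdate, hstock, crrStock_congr S0 u d h]

theorem hedge_wealth_succ (t : Fin T) (ω : Fin T → Bool) (hS : crrStock T S0 u d t ω ≠ 0)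
    (hud : u ≠ d) (hr : 1 + r ≠ 0) :
    hedgeStock S0 u d V t ω * crrStock T S0 u d (t + 1) ω
      + hedgeBond S0 u d r V t ω * (1 + r) ^ ((t : ℕ) + 1) = V (t + 1) ω := by
  have hud : u - d ≠ 0 := sub_ne_zero.2 hud
  have hB : (1 + r) ^ ((t : ℕ) + 1) ≠ 0 := pow_ne_zero _ hr
  rw [crrStock_succ, hedgeBond, hedgeStock]
  conv_rhs => rw [← update_eq_self t ω]
  cases ω t <;> simp only [Bool.false_eq_true, if_false, if_true] <;> field_simp <;> ring

theorem hedge_wealth (t : Fin T) (ω : Fin T → Bool) (hS : crrStock T S0 u d t ω ≠ 0)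
    (hud : u ≠ d) (hr : 1 + r ≠ 0)
    (hV : V t ω = (1 + r)⁻¹ * ((r - d) / (u - d) * V (t + 1) (update ω t true)
      + (1 - (r - d) / (u - d)) * V (t + 1) (update ω t false))) :
    hedgeStock S0 u d V t ω * crrStock T S0 u d t ω
      + hedgeBond S0 u d r V t ω * (1 + r) ^ (t : ℕ) = V t ω := by
  have hud : u - d ≠ 0 := sub_ne_zero.2 hud
  rw [hV, hedgeBond, hedgeStock, pow_succ]
  field_simp
  ring

end Hedge

end CRR

open CRR in
/-- existence of a replicating predictable self-financing strategy for an
arbitrary path-dependent payoff `f`, with initial wealth given by the CRR path-dependent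
pricing formula. -/
theorem crr_path_dependent_replication
    (T : ℕ) (hT : 0 < T) (S0 u d r : ℝ) (hS0 : 0 < S0)
    (hd : -1 < d) (hdr : d < r) (hru : r < u)
    (f : (Fin T → Bool) → ℝ) :
    ∃ a b : Fin T → (Fin T → Bool) → ℝ,
      crrPredictable a b ∧ crrSelfFinancing S0 u d r a b ∧
      (∀ ω, crrTerminalWealth hT S0 u d r a b ω = f ω) ∧
      (∀ ω, crrInitialWealth hT S0 a b ω =
        (1 + r) ^ (-(T : ℤ)) * ∑ ω' : Fin T → Bool,
          f ω' * ((r - d) / (u - d)) ^ crrUps ω'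
            * (1 - (r - d) / (u - d)) ^ (T - crrUps ω')) := by
  have hr : 1 + r ≠ 0 := by linarith
  have hud : u ≠ d := by linarith
  have hS : ∀ t ω, crrStock T S0 u d t ω ≠ 0 :=
    crrStock_ne_zero hS0.ne' (by linarith) (by linarith)
  set V := value r ((r - d) / (u - d)) f
  have hwealth_succ (t : Fin T) ω := hedge_wealth_succ (V := V) t ω (hS t ω) hud hr
  have hwealth (t : Fin T) ω := hedge_wealth t ω (hS t ω) hud hr (value_succ _ f hr t ω)
  refine ⟨hedgeStock S0 u d V, hedgeBond S0 u d r V, hedge_predictable (value_adapted r _ f),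
    fun t ht ω => (hwealth_succ ⟨t, by omega⟩ ω).trans (hwealth ⟨t + 1, ht⟩ ω).symm,
    fun ω => ?_, fun ω => ?_⟩
  · have hterminal := hwealth_succ ⟨T - 1, by omega⟩ ω
    simp only [Nat.sub_add_cancel hT] at hterminal
    exact hterminal.trans (value_self _ _ f ω)
  · have hinitial := hwealth ⟨0, hT⟩ ω
    rw [crrStock_zero, pow_zero, mul_one] at hinitial
    rw [crrInitialWealth, hinitial, value_zero]
end

section
/- Risk-neutral valuation of self-financing strategies (the static hedging principle in the CRR model): every predictable self-financing trading strategy with terminal wealth V : Ω → ℝ has initial wealth equal to (1+r)^(−T) * ∑_{ω ∈ Ω} V ω * q^(x(ω)) * (1−q)^(T − x(ω)). In particular, any two predictable self-financing strategies with the same terminal wealth have the same initial wealth. -/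
open Finset

/-!
Under the weights `q ^ x(ω) * (1 - q) ^ (T - x(ω))`, i.e. independent up-moves of probability
`q`, one period multiplies the stock price by `1 + u` or `1 + d` with mean
`q (1 + u) + (1 - q) (1 + d) = 1 + r`.
Since the portfolio chosen at time `t` does not see the move of period `t`, averaging that move out
shows that its expected value grows by the factor `1 + r` over the period; self-financing lets us
switch to the next portfolio without changing the value. After `T` periods the expected terminal
wealth is `(1 + r) ^ T` times the initial wealth.
-/

open Function

section BernoulliWeight

variable {ι R : Type*} [Fintype ι] [CommRing R]

def bernoulliWeight (p : R) (ω : ι → Bool) : R :=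
  ∏ i, if ω i then p else 1 - p

theorem sum_bernoulliWeight [DecidableEq ι] (p : R) : ∑ ω : ι → Bool, bernoulliWeight p ω = 1 := by
  calc ∑ ω : ι → Bool, bernoulliWeight p ω = ∏ _i : ι, ∑ x : Bool, if x then p else 1 - p :=
        (Fintype.prod_sum fun (_ : ι) (x : Bool) => if x then p else 1 - p).symm
    _ = 1 := by simp

theorem bernoulliWeight_eq_pow_mul_pow {T : ℕ} (p : R) (ω : Fin T → Bool) :
    bernoulliWeight p ω = p ^ crrUps ω * (1 - p) ^ (T - crrUps ω) := by
  have hcard : #{i | ¬ω i = true} = T - crrUps ω := by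
    have := Finset.card_filter_add_card_filter_not (s := Finset.univ) (fun i : Fin T => ω i = true)
    rw [Finset.card_univ, Fintype.card_fin] at this
    rw [crrUps]
    omega
  simp only [bernoulliWeight, Finset.prod_ite, Finset.prod_const, crrUps, hcard]

/-- Tower property: averaging out the coordinate `k` does not change the expectation. -/
theorem sum_mul_bernoulliWeight_update [DecidableEq ι] (p : R) (k : ι) (F : (ι → Bool) → R) :
    ∑ ω, (p * F (update ω k true) + (1 - p) * F (update ω k false)) * bernoulliWeight p ω
      = ∑ ω, F ω * bernoulliWeight p ω := by
  set e := Equiv.funSplitAt k Bool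
  have hw : ∀ x ρ, bernoulliWeight p (e.symm (x, ρ))
      = (if x then p else 1 - p) * ∏ j : {j // j ≠ k}, if ρ j then p else 1 - p := by
    intro x ρ
    rw [bernoulliWeight, Fintype.prod_eq_mul_prod_subtype_ne _ k]
    simp [e, fun j : {j // j ≠ k} => j.2]
  have hu : ∀ x y ρ, update (e.symm (x, ρ)) k y = e.symm (y, ρ) := by
    intro x y ρ
    ext j
    by_cases hj : j = k
    · subst hj; simp [e]
    · simp [e, hj]
  simp only [← e.symm.sum_comp (fun ω => _ * bernoulliWeight p ω), Fintype.sum_prod_type,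
    Fintype.sum_bool, hu, hw, ← Finset.sum_add_distrib]
  refine Finset.sum_congr rfl fun ρ _ => ?_
  simp only [if_true, Bool.false_eq_true, if_false]
  ring

end BernoulliWeight

section CRR

variable {T : ℕ} {S0 u d r q : ℝ} {a b : Fin T → (Fin T → Bool) → ℝ}

theorem update_apply_of_lt {α : Type*} (ω : Fin T → α) (t : Fin T) (x : α) :
    ∀ i : Fin T, (i : ℕ) < t → update ω t x i = ω i :=
  fun _ hi => update_of_ne (Fin.ne_of_lt hi) _ _

theorem crrStock_zero (ω : Fin T → Bool) : crrStock T S0 u d 0 ω = S0 := by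
  simp [crrStock]

theorem crrStock_congr {t : ℕ} {ω ω' : Fin T → Bool} (h : ∀ i : Fin T, (i : ℕ) < t → ω i = ω' i) :
    crrStock T S0 u d t ω = crrStock T S0 u d t ω' := by
  unfold crrStock
  congr 1
  refine Finset.prod_congr rfl fun i hi => ?_
  rw [h i (Finset.mem_filter.1 hi).2]

theorem crrStock_succ (t : Fin T) (ω : Fin T → Bool) :
    crrStock T S0 u d (t + 1) ω = crrStock T S0 u d t ω * (if ω t then 1 + u else 1 + d) := by
  have hset : Finset.univ.filter (fun i : Fin T => (i : ℕ) < t + 1)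
      = insert t (Finset.univ.filter fun i : Fin T => (i : ℕ) < t) := by
    ext i
    simp [Fin.ext_iff]
    omega
  rw [crrStock, crrStock, hset, Finset.prod_insert (by simp)]
  ring

theorem crrStock_succ_update (t : Fin T) (ω : Fin T → Bool) (x : Bool) :
    crrStock T S0 u d (t + 1) (update ω t x)
      = crrStock T S0 u d t ω * (if x then 1 + u else 1 + d) := by
  rw [crrStock_succ, crrStock_congr (update_apply_of_lt ω t x), update_self]

def crrPortfolioValue (S0 u d r : ℝ) (a b : Fin T → (Fin T → Bool) → ℝ) (t : Fin T) (s : ℕ)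
    (ω : Fin T → Bool) : ℝ :=
  a t ω * crrStock T S0 u d s ω + b t ω * (1 + r) ^ s

theorem crrPortfolioValue_zero (hpred : crrPredictable a b) (hT : 0 < T) (ω ω' : Fin T → Bool) :
    crrPortfolioValue S0 u d r a b ⟨0, hT⟩ 0 ω' = crrInitialWealth hT S0 a b ω := by
  obtain ⟨ha, hb⟩ := hpred ⟨0, hT⟩ ω' ω fun i hi => absurd hi (Nat.not_lt_zero _)
  simp [crrPortfolioValue, crrInitialWealth, crrStock_zero, ha, hb]

theorem crrPortfolioValue_succ_riskNeutral (hpred : crrPredictable a b)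
    (hq : q * (1 + u) + (1 - q) * (1 + d) = 1 + r) (t : Fin T) (ω : Fin T → Bool) :
    q * crrPortfolioValue S0 u d r a b t (t + 1) (update ω t true)
        + (1 - q) * crrPortfolioValue S0 u d r a b t (t + 1) (update ω t false)
      = (1 + r) * crrPortfolioValue S0 u d r a b t t ω := by
  obtain ⟨ha₁, hb₁⟩ := hpred t _ ω (update_apply_of_lt ω t true)
  obtain ⟨ha₀, hb₀⟩ := hpred t _ ω (update_apply_of_lt ω t false)
  simp only [crrPortfolioValue, crrStock_succ_update, ha₁, hb₁, ha₀, hb₀, if_true,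
    Bool.false_eq_true, if_false]
  linear_combination (a t ω * crrStock T S0 u d t ω) * hq

theorem sum_crrPortfolioValue_succ_mul_bernoulliWeight (hpred : crrPredictable a b)
    (hq : q * (1 + u) + (1 - q) * (1 + d) = 1 + r) (t : Fin T) :
    ∑ ω, crrPortfolioValue S0 u d r a b t (t + 1) ω * bernoulliWeight q ω
      = (1 + r) * ∑ ω, crrPortfolioValue S0 u d r a b t t ω * bernoulliWeight q ω := by
  rw [← sum_mul_bernoulliWeight_update q t, Finset.mul_sum]
  simp_rw [crrPortfolioValue_succ_riskNeutral hpred hq, mul_assoc]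

theorem sum_crrPortfolioValue_mul_bernoulliWeight (hpred : crrPredictable a b)
    (hsf : crrSelfFinancing S0 u d r a b) (hq : q * (1 + u) + (1 - q) * (1 + d) = 1 + r) :
    ∀ (t : ℕ) (ht : t < T),
      ∑ ω, crrPortfolioValue S0 u d r a b ⟨t, ht⟩ (t + 1) ω * bernoulliWeight q ω
        = (1 + r) ^ (t + 1)
          * ∑ ω, crrPortfolioValue S0 u d r a b ⟨0, by omega⟩ 0 ω * bernoulliWeight q ω
  | 0, ht => by
    simpa using sum_crrPortfolioValue_succ_mul_bernoulliWeight hpred hq ⟨0, ht⟩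
  | t + 1, ht => by
    have hnext : ∀ ω, crrPortfolioValue S0 u d r a b ⟨t + 1, ht⟩ (t + 1) ω
        = crrPortfolioValue S0 u d r a b ⟨t, by omega⟩ (t + 1) ω := fun ω => (hsf t ht ω).symm
    rw [sum_crrPortfolioValue_succ_mul_bernoulliWeight hpred hq ⟨t + 1, ht⟩]
    simp_rw [hnext]
    rw [sum_crrPortfolioValue_mul_bernoulliWeight hpred hsf hq t (by omega), pow_succ]
    ring

theorem sum_crrTerminalWealth_mul_bernoulliWeight (hT : 0 < T) (hpred : crrPredictable a b)
    (hsf : crrSelfFinancing S0 u d r a b) (hq : q * (1 + u) + (1 - q) * (1 + d) = 1 + r)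
    (ω : Fin T → Bool) :
    ∑ ω', crrTerminalWealth hT S0 u d r a b ω' * bernoulliWeight q ω'
      = (1 + r) ^ T * crrInitialWealth hT S0 a b ω := by
  have h := sum_crrPortfolioValue_mul_bernoulliWeight hpred hsf hq (T - 1) (by omega)
  rw [Nat.sub_add_cancel hT] at h
  simp only [crrPortfolioValue_zero hpred hT ω, ← Finset.mul_sum, sum_bernoulliWeight,
    mul_one] at h
  exact h

end CRR

theorem crr_risk_neutral_valuation_general
    (T : ℕ) (hT : 0 < T) (S0 u d r : ℝ)
    (hd : -1 < d) (hdr : d < r) (hru : r < u)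
    (a b : Fin T → (Fin T → Bool) → ℝ)
    (hpred : crrPredictable a b) (hsf : crrSelfFinancing S0 u d r a b) :
    ∀ ω, crrInitialWealth hT S0 a b ω =
      (1 + r) ^ (-(T : ℤ)) * ∑ ω' : Fin T → Bool,
        crrTerminalWealth hT S0 u d r a b ω'
          * ((r - d) / (u - d)) ^ crrUps ω'
          * (1 - (r - d) / (u - d)) ^ (T - crrUps ω') := by
  intro ω
  have hud : u - d ≠ 0 := (sub_pos.2 (hdr.trans hru)).ne'
  have hq : (r - d) / (u - d) * (1 + u) + (1 - (r - d) / (u - d)) * (1 + d) = 1 + r := by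
    field_simp
    ring
  simp_rw [mul_assoc, ← bernoulliWeight_eq_pow_mul_pow]
  rw [sum_crrTerminalWealth_mul_bernoulliWeight hT hpred hsf hq ω, zpow_neg, zpow_natCast,
    inv_mul_cancel_left₀ (pow_ne_zero _ (by linarith))]

/-- risk-neutral valuation of self-financing strategies in the CRR model:
the initial wealth of any predictable self-financing strategy equals the discounted
risk-neutral weighted sum of its terminal wealth over all trajectories. -/
theorem crr_risk_neutral_valuation
    (T : ℕ) (hT : 0 < T) (S0 u d r : ℝ) (hS0 : 0 < S0)
    (hd : -1 < d) (hdr : d < r) (hru : r < u)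
    (a b : Fin T → (Fin T → Bool) → ℝ)
    (hpred : crrPredictable a b) (hsf : crrSelfFinancing S0 u d r a b) :
    ∀ ω, crrInitialWealth hT S0 a b ω =
      (1 + r) ^ (-(T : ℤ)) * ∑ ω' : Fin T → Bool,
        crrTerminalWealth hT S0 u d r a b ω'
          * ((r - d) / (u - d)) ^ crrUps ω'
          * (1 - (r - d) / (u - d)) ^ (T - crrUps ω') :=
  crr_risk_neutral_valuation_general T hT S0 u d r hd hdr hru a b hpred hsf
end

section
/- Proposition (invariance property of the extended CRR model, absolutely summable case): if f : ℤ → ℝ satisfies Summable (fun K => |f K|), then for every s the series ∑'_{K : ℤ} f K * w n K s converges, the function s ↦ ∑'_{K : ℤ} f K * w n K s is summable over ℤ, and ∑'_{s : ℤ} ∑'_{K : ℤ} f K * w n K s = ∑'_{K : ℤ} f K. -/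
/-- Backward-walk weight of the extended CRR lattice (in logarithmic coordinates):
`crrWeight q n K s` is the discounted replication value, at state `s` with `n` periods
remaining to maturity, of the degenerate digital option paying 1 at maturity exactly
when the underlying ends at the strike indexed by `K`.  It equals
`(n.choose j) * q^j * (1-q)^(n-j)` if there is a natural number `j ≤ n` with
`s = K + n - 2*j`, and `0` otherwise. -/
noncomputable def crrWeight (q : ℝ) (n : ℕ) (K s : ℤ) : ℝ :=
  if h : ∃ j : ℕ, j ≤ n ∧ s = K + (n : ℤ) - 2 * (j : ℤ) then
    (n.choose h.choose : ℝ) * q ^ h.choose * (1 - q) ^ (n - h.choose)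
  else 0

lemma crrWeight_nonneg {q : ℝ} (hq0 : 0 ≤ q) (hq1 : q ≤ 1) (n : ℕ) (K s : ℤ) :
    0 ≤ crrWeight q n K s := by
  unfold crrWeight
  split
  · have : 0 ≤ 1 - q := by linarith
    positivity
  · exact le_refl 0

lemma crrWeight_eq_sum (q : ℝ) (n : ℕ) (K s : ℤ) :
    crrWeight q n K s = ∑ j ∈ Finset.range (n + 1),
      (if s = K + (n : ℤ) - 2 * (j : ℤ) then
        (n.choose j : ℝ) * q ^ j * (1 - q) ^ (n - j) else 0) := by
  unfold crrWeight
  split_ifs with h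
  · obtain ⟨hle, hs⟩ := h.choose_spec
    rw [Finset.sum_eq_single_of_mem h.choose (Finset.mem_range.mpr (by omega))]
    · rw [if_pos hs]
    · intro b hb hne
      rw [if_neg]
      intro hb'
      exact hne (by omega)
  · symm
    apply Finset.sum_eq_zero
    intro j hj
    rw [if_neg]
    intro hs
    exact h ⟨j, by have := Finset.mem_range.mp hj; omega, hs⟩

lemma binom_sum (q : ℝ) (n : ℕ) :
    ∑ j ∈ Finset.range (n + 1), (n.choose j : ℝ) * q ^ j * (1 - q) ^ (n - j) = 1 := by
  have := add_pow q (1 - q) n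
  simp only [add_sub_cancel, one_pow] at this
  rw [Finset.sum_congr rfl (fun j _ => by ring :
    ∀ j ∈ Finset.range (n+1), (n.choose j : ℝ) * q ^ j * (1 - q) ^ (n - j)
      = q ^ j * (1 - q) ^ (n - j) * (n.choose j : ℝ))]
  exact this.symm

lemma crrWeight_summable_s (q : ℝ) (n : ℕ) (K : ℤ) :
    Summable (fun s => crrWeight q n K s) := by
  have : (fun s => crrWeight q n K s) = fun s => ∑ j ∈ Finset.range (n + 1),
      (if s = K + (n : ℤ) - 2 * (j : ℤ) then
        (n.choose j : ℝ) * q ^ j * (1 - q) ^ (n - j) else 0) := by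
    funext s; exact crrWeight_eq_sum q n K s
  rw [this]
  apply summable_sum
  intro j _
  apply summable_of_ne_finset_zero (s := {K + (n : ℤ) - 2 * (j : ℤ)})
  intro s hs
  rw [if_neg (by simpa using hs)]

lemma crrWeight_tsum_s (q : ℝ) (n : ℕ) (K : ℤ) :
    ∑' s : ℤ, crrWeight q n K s = 1 := by
  have h1 : ∑' s : ℤ, crrWeight q n K s = ∑ j ∈ Finset.range (n + 1),
      ∑' s : ℤ, (if s = K + (n : ℤ) - 2 * (j : ℤ) then
        (n.choose j : ℝ) * q ^ j * (1 - q) ^ (n - j) else 0) := by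
    rw [show (fun s => crrWeight q n K s) = fun s => ∑ j ∈ Finset.range (n + 1),
      (if s = K + (n : ℤ) - 2 * (j : ℤ) then
        (n.choose j : ℝ) * q ^ j * (1 - q) ^ (n - j) else 0) from
      funext (crrWeight_eq_sum q n K)]
    apply Summable.tsum_finsetSum
    intro j _
    apply summable_of_ne_finset_zero (s := {K + (n : ℤ) - 2 * (j : ℤ)})
    intro s hs
    rw [if_neg (by simpa using hs)]
  rw [h1]
  have h2 : ∀ j ∈ Finset.range (n + 1),
      (∑' s : ℤ, (if s = K + (n : ℤ) - 2 * (j : ℤ) then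
        (n.choose j : ℝ) * q ^ j * (1 - q) ^ (n - j) else 0))
      = (n.choose j : ℝ) * q ^ j * (1 - q) ^ (n - j) := by
    intro j _
    exact tsum_ite_eq _ _
  rw [Finset.sum_congr rfl h2]
  exact binom_sum q n

lemma crrWeight_le_one {q : ℝ} (hq0 : 0 ≤ q) (hq1 : q ≤ 1) (n : ℕ) (K s : ℤ) :
    crrWeight q n K s ≤ 1 := by
  rw [crrWeight_eq_sum]
  conv_rhs => rw [← binom_sum q n]
  refine Finset.sum_le_sum fun j _ => ?_
  split_ifs
  · exact le_rfl
  · have : 0 ≤ 1 - q := by linarith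
    positivity

set_option maxHeartbeats 1000000 in
/-- invariance property of the extended CRR model, absolutely summable case. -/
theorem crr_extended_invariance_summable
    (q : ℝ) (hq0 : 0 ≤ q) (hq1 : q ≤ 1) (n : ℕ)
    (f : ℤ → ℝ) (hf : Summable fun K => |f K|) :
    (∀ s : ℤ, Summable fun K => f K * crrWeight q n K s) ∧
    (Summable fun s : ℤ => ∑' K : ℤ, f K * crrWeight q n K s) ∧
    ∑' s : ℤ, ∑' K : ℤ, f K * crrWeight q n K s = ∑' K : ℤ, f K := by
  have hwnn := crrWeight_nonneg hq0 hq1 n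
  -- abs-valued product summability, indexed as (K, s)
  have hnn : ∀ p : ℤ × ℤ, 0 ≤ |f p.1| * crrWeight q n p.1 p.2 :=
    fun p => mul_nonneg (abs_nonneg _) (hwnn p.1 p.2)
  have hinner : ∀ K : ℤ, Summable fun s : ℤ => |f K| * crrWeight q n K s :=
    fun K => (crrWeight_summable_s q n K).mul_left _
  have houterK : Summable fun K : ℤ => ∑' s : ℤ, |f K| * crrWeight q n K s := by
    have he : (fun K : ℤ => ∑' s : ℤ, |f K| * crrWeight q n K s) = fun K => |f K| := by
      funext K; rw [tsum_mul_left, crrWeight_tsum_s, mul_one]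
    rw [he]; exact hf
  have hF : Summable (fun p : ℤ × ℤ => |f p.1| * crrWeight q n p.1 p.2) :=
    (summable_prod_of_nonneg hnn).mpr ⟨hinner, houterK⟩
  have habs : (fun p : ℤ × ℤ => |f p.1 * crrWeight q n p.1 p.2|)
      = fun p : ℤ × ℤ => |f p.1| * crrWeight q n p.1 p.2 := by
    funext p; rw [abs_mul, abs_of_nonneg (hwnn _ _)]
  have hGabs : Summable (fun p : ℤ × ℤ => |f p.1 * crrWeight q n p.1 p.2|) := by
    rw [habs]; exact hF
  have hG : Summable (fun p : ℤ × ℤ => f p.1 * crrWeight q n p.1 p.2) :=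
    hGabs.of_abs
  -- part 1
  have h1 : ∀ s : ℤ, Summable fun K => f K * crrWeight q n K s := by
    intro s
    have hb : ∀ K : ℤ, |f K * crrWeight q n K s| ≤ |f K| := by
      intro K
      rw [abs_mul, abs_of_nonneg (hwnn _ _)]
      calc |f K| * crrWeight q n K s ≤ |f K| * 1 :=
            mul_le_mul_of_nonneg_left (crrWeight_le_one hq0 hq1 n K s) (abs_nonneg _)
        _ = |f K| := mul_one _
    have : Summable fun K : ℤ => |f K * crrWeight q n K s| :=
      Summable.of_nonneg_of_le (fun K => abs_nonneg _) hb hf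
    exact this.of_abs
  -- abs-valued product summability, indexed as (s, K)
  have hF' : Summable (fun p : ℤ × ℤ => |f p.2| * crrWeight q n p.2 p.1) := hF.prod_symm
  have hnn' : ∀ p : ℤ × ℤ, 0 ≤ |f p.2| * crrWeight q n p.2 p.1 :=
    fun p => mul_nonneg (abs_nonneg _) (hwnn p.2 p.1)
  have houter : Summable fun s : ℤ => ∑' K : ℤ, |f K| * crrWeight q n K s :=
    ((summable_prod_of_nonneg hnn').mp hF').2
  -- part 2
  have h2 : Summable fun s : ℤ => ∑' K : ℤ, f K * crrWeight q n K s := by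
    have hb : ∀ s : ℤ, |∑' K : ℤ, f K * crrWeight q n K s|
        ≤ ∑' K : ℤ, |f K| * crrWeight q n K s := by
      intro s
      have hs : Summable fun K : ℤ => |f K * crrWeight q n K s| := (h1 s).abs
      calc |∑' K : ℤ, f K * crrWeight q n K s|
          ≤ ∑' K : ℤ, |f K * crrWeight q n K s| := by
            have := norm_tsum_le_tsum_norm (f := fun K : ℤ => f K * crrWeight q n K s)
              (by simp only [Real.norm_eq_abs]; exact hs)
            simp only [Real.norm_eq_abs] at this
            exact this
        _ = ∑' K : ℤ, |f K| * crrWeight q n K s := by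
            congr 1; funext K; rw [abs_mul, abs_of_nonneg (hwnn _ _)]
    have : Summable fun s : ℤ => |∑' K : ℤ, f K * crrWeight q n K s| :=
      Summable.of_nonneg_of_le (fun s => abs_nonneg _) hb houter
    exact this.of_abs
  -- part 3
  refine ⟨h1, h2, ?_⟩
  have hswap : ∑' s : ℤ, ∑' K : ℤ, f K * crrWeight q n K s
      = ∑' K : ℤ, ∑' s : ℤ, f K * crrWeight q n K s :=
    Summable.tsum_comm (f := fun K s => f K * crrWeight q n K s) hG
  rw [hswap]
  congr 1
  funext K
  rw [tsum_mul_left, crrWeight_tsum_s, mul_one]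
end

section
/- Asymptotics of the one-step risk-neutral variance as the time step vanishes: the function h ↦ (exp(r*h)*exp(μ*h + σ*Real.sqrt h) + exp(r*h)*exp(μ*h − σ*Real.sqrt h) − exp(2*μ*h) − exp(2*r*h)) / h tends to σ^2 as h → 0 from the right (Filter.Tendsto along 𝓝[>] 0 to 𝓝 (σ^2)). Consequently, with T/h steps of size h, the total risk-neutral variance of log(S_T/S_0) converges to T*σ^2, the Black–Scholes–Merton variance, which does not involve the drift μ. -/
/-!
Write `s = √h`. Since `U h * D h = exp (2 * μ * h)`, the numerator splits as
`exp ((μ + r) * h) * (exp (σ * s) - 1) * (1 - exp (-σ * s))` plus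
`2 * exp ((μ + r) * h) - exp (2 * μ * h) - exp (2 * r * h)`.
Divided by `h = s * s`, the first part is a product of two difference quotients of `exp` at `0`,
tending to `σ * σ`; the second is the difference quotient at `0` of a function vanishing there
with derivative `2 * (μ + r) - 2 * μ - 2 * r = 0`.
-/

open Real Filter

open Topology

lemma tendsto_div_self_nhdsNE_of_hasDerivAt {f : ℝ → ℝ} {f' : ℝ} (hf : HasDerivAt f f' 0)
    (hf₀ : f 0 = 0) : Tendsto (fun t ↦ f t / t) (𝓝[≠] 0) (𝓝 f') := by
  simpa [hf₀, div_eq_inv_mul] using hf.tendsto_slope_zero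

lemma tendsto_exp_mul_sub_one_div (a : ℝ) :
    Tendsto (fun t ↦ (exp (a * t) - 1) / t) (𝓝[≠] 0) (𝓝 a) := by
  refine tendsto_div_self_nhdsNE_of_hasDerivAt ?_ (by simp)
  simpa using ((hasDerivAt_id' 0).const_mul a).exp.sub_const 1

lemma Real.tendsto_sqrt_nhdsGT_zero : Tendsto sqrt (𝓝[>] 0) (𝓝[>] 0) :=
  tendsto_nhdsWithin_iff.2
    ⟨(continuous_sqrt.tendsto' 0 0 sqrt_zero).mono_left nhdsWithin_le_nhds,
      eventually_nhdsWithin_of_forall fun _ hx ↦ sqrt_pos.2 hx⟩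

lemma tendsto_exp_mul_sqrt_sub_one_div_sqrt (a : ℝ) :
    Tendsto (fun h ↦ (exp (a * √h) - 1) / √h) (𝓝[>] 0) (𝓝 a) :=
  (tendsto_exp_mul_sub_one_div a).comp <|
    tendsto_sqrt_nhdsGT_zero.mono_right (nhdsGT_le_nhdsNE 0)

lemma tendsto_two_exp_add_mul_sub_exp_sub_exp_div (a b : ℝ) :
    Tendsto (fun h ↦ (2 * exp ((a + b) * h) - exp (2 * a * h) - exp (2 * b * h)) / h)
      (𝓝[≠] 0) (𝓝 0) := by
  refine tendsto_div_self_nhdsNE_of_hasDerivAt ?_ (by norm_num)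
  have hexp (c : ℝ) : HasDerivAt (fun h ↦ exp (c * h)) c 0 := by
    simpa using ((hasDerivAt_id' 0).const_mul c).exp
  exact ((((hexp (a + b)).const_mul 2).sub (hexp (2 * a))).sub (hexp (2 * b))).congr_deriv
    (by ring)

lemma one_step_variance_div_eq (μ r σ : ℝ) {h : ℝ} (hh : 0 < h) :
    (exp (r * h) * exp (μ * h + σ * √h) + exp (r * h) * exp (μ * h - σ * √h)
        - exp (2 * μ * h) - exp (2 * r * h)) / h
      = (2 * exp ((μ + r) * h) - exp (2 * μ * h) - exp (2 * r * h)) / h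
        - exp ((μ + r) * h) * ((exp (σ * √h) - 1) / √h * ((exp (-σ * √h) - 1) / √h)) := by
  have hsq : √h * √h = h := mul_self_sqrt hh.le
  have hs : √h ≠ 0 := (sqrt_pos.2 hh).ne'
  have he : exp (σ * √h) ≠ 0 := exp_ne_zero _
  have hexp_two_mul (a : ℝ) : exp (2 * a * h) = exp (a * h) ^ 2 := by
    rw [sq, ← exp_add]; ring_nf
  simp only [hexp_two_mul, add_mul, exp_add, exp_sub, neg_mul, exp_neg]
  generalize exp (r * h) = x, exp (μ * h) = y, exp (σ * √h) = e at he ⊢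
  generalize √h = s at hs hsq ⊢
  subst hsq
  field_simp
  ring

theorem one_step_risk_neutral_variance_asymptotics_general
    (μ r σ : ℝ) :
    Filter.Tendsto
      (fun h : ℝ =>
        (Real.exp (r * h) * Real.exp (μ * h + σ * Real.sqrt h)
          + Real.exp (r * h) * Real.exp (μ * h - σ * Real.sqrt h)
          - Real.exp (2 * μ * h) - Real.exp (2 * r * h)) / h)
      (nhdsWithin 0 (Set.Ioi 0)) (nhds (σ ^ 2)) := by
  have hdrift := (tendsto_two_exp_add_mul_sub_exp_sub_exp_div μ r).mono_left
    (nhdsGT_le_nhdsNE 0)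
  have hgrowth : Tendsto (fun h ↦ exp ((μ + r) * h)) (𝓝[>] 0) (𝓝 1) :=
    ((continuous_exp.comp (continuous_const_mul (μ + r))).tendsto' 0 1 (by simp)).mono_left
      nhdsWithin_le_nhds
  have hvol := (tendsto_exp_mul_sqrt_sub_one_div_sqrt σ).mul
    (tendsto_exp_mul_sqrt_sub_one_div_sqrt (-σ))
  have hlim := hdrift.sub (hgrowth.mul hvol)
  rw [show (0 : ℝ) - 1 * (σ * -σ) = σ ^ 2 by ring] at hlim
  exact hlim.congr' <| eventually_nhdsWithin_of_forall fun h hh ↦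
    (one_step_variance_div_eq μ r σ hh).symm

/-- asymptotics of the one-step risk-neutral variance of the binomial
approximation of the BSM model as the time step vanishes: the one-step risk-neutral
variance `R U + R D - U D - R²` divided by the step size `h` tends to `σ²` as `h → 0⁺`,
independently of the drift `μ`. -/
theorem one_step_risk_neutral_variance_asymptotics
    (μ r σ : ℝ) (hσ : 0 < σ) :
    Filter.Tendsto
      (fun h : ℝ =>
        (Real.exp (r * h) * Real.exp (μ * h + σ * Real.sqrt h)
          + Real.exp (r * h) * Real.exp (μ * h - σ * Real.sqrt h)
          - Real.exp (2 * μ * h) - Real.exp (2 * r * h)) / h)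
      (nhdsWithin 0 (Set.Ioi 0)) (nhds (σ ^ 2)) :=
  one_step_risk_neutral_variance_asymptotics_general μ r σ
end
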